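/- Two distinct lines through the origin in ℝ² with rational slopes d₁/r₁ and d₂/r₂ (in lowest terms, with r_i ≥ 1) project under the quotient map ℝ² → ℝ²/ℤ² to closed geodesic circles on the torus that intersect in exactly |d₁·r₂ − d₂·r₁| points. -/

import Mathlib

private lemma ac_eq_iff (x y : ℝ) :
    (↑x : AddCircle (1:ℝ)) = ↑y ↔ ∃ m : ℤ, x - y = (m:ℝ) := by
  rw [← sub_eq_zero, ← QuotientAddGroup.mk_sub, AddCircle.coe_eq_zero_iff]
  simp [eq_comm]

/-- Two distinct lines through the origin in ℝ² with rational slopes d₁/r₁, d₂/r₂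
(in lowest terms, rᵢ ≥ 1) project to the torus ℝ²/ℤ² (modelled as a product of two
copies of `AddCircle 1`) to closed geodesic circles meeting in exactly
|d₁r₂ − d₂r₁| points. -/
theorem line_images_on_torus_intersection_card
    (r₁ d₁ r₂ d₂ : ℤ) (hr₁ : 1 ≤ r₁) (hr₂ : 1 ≤ r₂)
    (hg₁ : Int.gcd r₁ d₁ = 1) (hg₂ : Int.gcd r₂ d₂ = 1)
    (hslope : (d₁ : ℚ) / (r₁ : ℚ) ≠ (d₂ : ℚ) / (r₂ : ℚ)) :
    Nat.card
      ↥(Set.range (fun t : ℝ =>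
          (((t * (r₁ : ℝ) : ℝ) : AddCircle (1 : ℝ)),
           ((t * (d₁ : ℝ) : ℝ) : AddCircle (1 : ℝ)))) ∩
        Set.range (fun t : ℝ =>
          (((t * (r₂ : ℝ) : ℝ) : AddCircle (1 : ℝ)),
           ((t * (d₂ : ℝ) : ℝ) : AddCircle (1 : ℝ))))) =
      (d₁ * r₂ - d₂ * r₁).natAbs := by
  set D : ℤ := d₁ * r₂ - d₂ * r₁ with hDdef
  have hr₁0 : (r₁ : ℚ) ≠ 0 := by positivity
  have hr₂0 : (r₂ : ℚ) ≠ 0 := by positivity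
  have hD : D ≠ 0 := by
    intro h
    apply hslope
    rw [div_eq_div_iff hr₁0 hr₂0]
    have : (d₁ : ℚ) * r₂ - d₂ * r₁ = 0 := by exact_mod_cast congrArg (fun z : ℤ => (z : ℚ)) h
    linarith
  have hDR : (D : ℝ) ≠ 0 := Int.cast_ne_zero.mpr hD
  have hDReq : (D : ℝ) = (d₁:ℝ) * r₂ - (d₂:ℝ) * r₁ := by rw [hDdef]; push_cast; ring
  obtain ⟨a₁, b₁, hab₁⟩ := (Int.isCoprime_iff_gcd_eq_one.mpr hg₁)
  obtain ⟨a₂, b₂, hab₂⟩ := (Int.isCoprime_iff_gcd_eq_one.mpr hg₂)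
  set f : ℤ → AddCircle (1:ℝ) × AddCircle (1:ℝ) := fun k =>
    ((((k:ℝ) * r₁ / D : ℝ) : AddCircle (1:ℝ)), (((k:ℝ) * d₁ / D : ℝ) : AddCircle (1:ℝ)))
    with hf
  set S := (Set.range (fun t : ℝ =>
          (((t * (r₁ : ℝ) : ℝ) : AddCircle (1 : ℝ)),
           ((t * (d₁ : ℝ) : ℝ) : AddCircle (1 : ℝ)))) ∩
        Set.range (fun t : ℝ =>
          (((t * (r₂ : ℝ) : ℝ) : AddCircle (1 : ℝ)),
           ((t * (d₂ : ℝ) : ℝ) : AddCircle (1 : ℝ))))) with hS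
  -- every f k lies in S
  have hmem : ∀ k : ℤ, f k ∈ S := by
    intro k
    have hab₂R : (a₂:ℝ) * r₂ + (b₂:ℝ) * d₂ = 1 := by exact_mod_cast hab₂
    constructor
    · refine ⟨(k:ℝ)/D, ?_⟩
      simp only [hf, Prod.mk.injEq]
      constructor <;> · congr 1; ring
    · refine ⟨((k * (a₂ * r₁ + b₂ * d₁) : ℤ) : ℝ)/D, ?_⟩
      simp only [hf, Prod.mk.injEq]
      constructor
      · rw [ac_eq_iff]
        refine ⟨k * b₂, ?_⟩
        push_cast
        field_simp
        rw [hDReq]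
        linear_combination ((k:ℝ) * (r₁:ℝ)) * hab₂R
      · rw [ac_eq_iff]
        refine ⟨-(k * a₂), ?_⟩
        push_cast
        field_simp
        rw [hDReq]
        linear_combination ((k:ℝ) * (d₁:ℝ)) * hab₂R
  -- every point of S is some f k
  have hrev : ∀ p ∈ S, ∃ k : ℤ, p = f k := by
    rintro p ⟨⟨t, ht⟩, ⟨s, hs⟩⟩
    have h1 : ((t * (r₁:ℝ) : ℝ) : AddCircle (1:ℝ)) = ((s * (r₂:ℝ) : ℝ) : AddCircle (1:ℝ)) := by
      rw [show ((t * (r₁:ℝ) : ℝ) : AddCircle (1:ℝ)) = p.1 from congrArg Prod.fst ht,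
          show ((s * (r₂:ℝ) : ℝ) : AddCircle (1:ℝ)) = p.1 from congrArg Prod.fst hs]
    have h2 : ((t * (d₁:ℝ) : ℝ) : AddCircle (1:ℝ)) = ((s * (d₂:ℝ) : ℝ) : AddCircle (1:ℝ)) := by
      rw [show ((t * (d₁:ℝ) : ℝ) : AddCircle (1:ℝ)) = p.2 from congrArg Prod.snd ht,
          show ((s * (d₂:ℝ) : ℝ) : AddCircle (1:ℝ)) = p.2 from congrArg Prod.snd hs]
    obtain ⟨m, hm⟩ := (ac_eq_iff _ _).mp h1
    obtain ⟨nn, hn⟩ := (ac_eq_iff _ _).mp h2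
    refine ⟨nn * r₂ - m * d₂, ?_⟩
    have hT : t = ((nn * r₂ - m * d₂ : ℤ) : ℝ) / D := by
      rw [eq_div_iff hDR, hDReq]
      push_cast
      linear_combination (r₂:ℝ) * hn - (d₂:ℝ) * hm
    rw [← ht]
    simp only [hf, Prod.mk.injEq]
    constructor <;> · rw [hT]; congr 1; ring
  -- f is D-periodic
  have hfper : ∀ k l : ℤ, D ∣ (k - l) → f k = f l := by
    rintro k l ⟨c, hc⟩
    have hcR : (k:ℝ) - l = (D:ℝ) * c := by exact_mod_cast hc
    simp only [hf, Prod.mk.injEq]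
    constructor
    · rw [ac_eq_iff]
      refine ⟨c * r₁, ?_⟩
      push_cast
      field_simp
      linear_combination hcR
    · rw [ac_eq_iff]
      refine ⟨c * d₁, ?_⟩
      push_cast
      field_simp
      linear_combination (d₁:ℝ) * hcR
  -- f is injective mod D
  have hfinj : ∀ k l : ℤ, f k = f l → D ∣ (k - l) := by
    intro k l h
    obtain ⟨m, hm⟩ := (ac_eq_iff _ _).mp (congrArg Prod.fst h)
    obtain ⟨nn, hn⟩ := (ac_eq_iff _ _).mp (congrArg Prod.snd h)
    have hm' : (k - l) * r₁ = m * D := by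
      have : ((k:ℝ) - l) * r₁ = (m:ℝ) * D := by
        field_simp at hm
        linear_combination hm
      exact_mod_cast this
    have hn' : (k - l) * d₁ = nn * D := by
      have : ((k:ℝ) - l) * d₁ = (nn:ℝ) * D := by
        field_simp at hn
        linear_combination hn
      exact_mod_cast this
    exact ⟨a₁ * m + b₁ * nn, by linear_combination a₁ * hm' + b₁ * hn' - (k - l) * hab₁⟩
  -- counting
  have hn0 : D.natAbs ≠ 0 := Int.natAbs_ne_zero.mpr hD
  haveI : NeZero D.natAbs := ⟨hn0⟩
  set g : ZMod D.natAbs → AddCircle (1:ℝ) × AddCircle (1:ℝ) := fun x => f (x.val) with hg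
  have hginj : Function.Injective g := by
    intro x y hxy
    have hdvd : ((D.natAbs : ℤ)) ∣ ((x.val : ℤ) - (y.val : ℤ)) :=
      Int.natAbs_dvd.mpr (hfinj _ _ hxy)
    have h0 := (ZMod.intCast_zmod_eq_zero_iff_dvd _ D.natAbs).mpr hdvd
    push_cast at h0
    simpa [sub_eq_zero, ZMod.natCast_val, ZMod.cast_id] using h0
  have hrange : S = Set.range g := by
    ext p
    constructor
    · intro hp
      obtain ⟨k, hk⟩ := hrev p hp
      refine ⟨(k : ZMod D.natAbs), ?_⟩
      have hdvd : D ∣ (((k : ZMod D.natAbs).val : ℤ) - k) := by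
        rw [← Int.natAbs_dvd]
        rw [← ZMod.intCast_zmod_eq_zero_iff_dvd]
        push_cast
        simp [ZMod.natCast_val, ZMod.cast_id]
      exact (hfper _ _ hdvd).trans hk.symm
    · rintro ⟨x, rfl⟩
      exact hmem _
  rw [hrange, Nat.card_range_of_injective hginj, Nat.card_zmod]
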